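/- arXiv:2306.13623 — 2 statements merged into one kernel-verified Lean document; each statement's English description precedes it below -/
import Mathlib

section
/- Let Ω be an open subset of ℝ^N with finite Lebesgue measure and let u ∈ L¹(Ω). Then there exists an N-function G such that ∫_Ω G(|u(x)|) dx < ∞, i.e. every integrable function on a finite-measure set belongs to some Orlicz class. -/
open MeasureTheory Filter
open scoped ENNReal

/-- The defining properties of the density `g` of an N-function:
`g 0 = 0`, `g > 0` on `(0,∞)`, nondecreasing on `[0,∞)`, right-continuous,
and `g t → ∞` as `t → ∞`. -/
def IsNDensity (g : ℝ → ℝ) : Prop :=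
  g 0 = 0 ∧ (∀ t > 0, 0 < g t) ∧ MonotoneOn g (Set.Ici 0) ∧
    (∀ t ≥ (0:ℝ), ContinuousWithinAt g (Set.Ici t) t) ∧
    Tendsto g atTop atTop

/-- The N-function associated with a density `g`: `G t = ∫_0^t g(τ) dτ`. -/
noncomputable def NFun (g : ℝ → ℝ) (t : ℝ) : ℝ := ∫ τ in (0)..t, g τ

/-- The conjugate density `g*(s) = sup {t ≥ 0 : g t ≤ s}`. -/
noncomputable def conjDensity (g : ℝ → ℝ) (s : ℝ) : ℝ := sSup {t | 0 ≤ t ∧ g t ≤ s}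

/-- The modular `ρ(u; G) = ∫_Ω G(|u(x)|) dx`, as an extended nonnegative real. -/
noncomputable def modular {N : ℕ} (Ω : Set (Fin N → ℝ)) (G : ℝ → ℝ)
    (u : (Fin N → ℝ) → ℝ) : ℝ≥0∞ :=
  ∫⁻ x in Ω, ENNReal.ofReal (G |u x|)

/-- The Orlicz norm `‖u‖_G = sup { ∫_Ω |u v| : v measurable, ∫_Ω Gs(|v|) ≤ 1 }`,
where `Gs` is the conjugate N-function of `G`. -/
noncomputable def orliczNorm {N : ℕ} (Ω : Set (Fin N → ℝ)) (Gs : ℝ → ℝ)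
    (u : (Fin N → ℝ) → ℝ) : ℝ≥0∞ :=
  ⨆ (v : (Fin N → ℝ) → ℝ) (_ : Measurable v ∧ modular Ω Gs v ≤ 1),
    ∫⁻ x in Ω, ENNReal.ofReal |u x * v x|

/-- The Luxemburg norm `‖u‖_(G) = inf { λ > 0 : ∫_Ω G(|u|/λ) ≤ 1 }`
(`⊤` if no such `λ` exists). -/
noncomputable def luxNorm {N : ℕ} (Ω : Set (Fin N → ℝ)) (G : ℝ → ℝ)
    (u : (Fin N → ℝ) → ℝ) : ℝ≥0∞ :=
  ⨅ (l : ℝ) (_ : 0 < l ∧ (∫⁻ x in Ω, ENNReal.ofReal (G (|u x| / l))) ≤ 1),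
    ENNReal.ofReal l

/-- The Δ₂ condition: `∃ k > 0, ∃ T ≥ 0, G(2t) ≤ k G(t)` for all `t ≥ T`. -/
def Delta2 (G : ℝ → ℝ) : Prop := ∃ k > (0:ℝ), ∃ T ≥ (0:ℝ), ∀ t ≥ T, G (2 * t) ≤ k * G t

/-!
By absolute continuity of the integral there are thresholds `T n` with
`∫_{|f| ≥ T n} |f| ≤ 2⁻ⁿ`. Take the density `g t = min t 1 + #{n < ⌊t⌋ : T n ≤ ⌊t⌋}`: the count
only changes at integers, so `g` is a right-continuous step function, and it grows without bound.
Since `g` is nondecreasing, `G t ≤ t g t ≤ t + ∑ₙ t · 1[T n ≤ t]`, hence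
`∫ G(|f|) ≤ ∫ |f| + ∑ₙ ∫_{|f| ≥ T n} |f| ≤ ∫ |f| + 2`.
-/

open Set Topology

noncomputable def countBelow (T : ℕ → ℝ) (m : ℕ) : ℕ := ((Finset.range m).filter (T · ≤ m)).card

section countBelow

variable (T : ℕ → ℝ)

lemma countBelow_zero : countBelow T 0 = 0 := rfl

lemma countBelow_mono : Monotone (countBelow T) := fun m m' hm => by
  refine Finset.card_le_card fun n hn => ?_
  simp only [Finset.mem_filter, Finset.mem_range] at hn ⊢
  exact ⟨hn.1.trans_le hm, hn.2.trans (by exact_mod_cast hm)⟩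

lemma tendsto_countBelow_atTop : Tendsto (countBelow T) atTop atTop := by
  refine tendsto_atTop.2 fun j => ?_
  have hT : ∀ᶠ m : ℕ in atTop, ∀ n ∈ Finset.range j, T n ≤ m :=
    (Finset.range j).eventually_all.2 fun n _ =>
      tendsto_natCast_atTop_atTop.eventually_ge_atTop (T n)
  filter_upwards [hT, eventually_ge_atTop j] with m hTm hjm
  calc j = (Finset.range j).card := (Finset.card_range j).symm
    _ ≤ countBelow T m := Finset.card_le_card fun n hn => by
      simp only [Finset.mem_filter, Finset.mem_range] at hn ⊢
      exact ⟨hn.trans_le hjm, hTm n (Finset.mem_range.2 hn)⟩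

end countBelow

noncomputable def stepDensity (k : ℕ → ℕ) (x : ℝ) : ℝ := min x 1 + k ⌊x⌋₊

section stepDensity

variable {k : ℕ → ℕ}

lemma stepDensity_monotone (hk : Monotone k) : Monotone (stepDensity k) := fun _ _ hxy =>
  add_le_add (min_le_min_right 1 hxy) (Nat.cast_le.2 (hk (Nat.floor_le_floor hxy)))

lemma stepDensity_le_one_add (x : ℝ) : stepDensity k x ≤ 1 + k ⌊x⌋₊ :=
  add_le_add_left (min_le_right x 1) _

lemma continuousWithinAt_stepDensity {x : ℝ} (hx : 0 ≤ x) :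
    ContinuousWithinAt (stepDensity k) (Ici x) x := by
  have hfloor : ∀ᶠ y in 𝓝[≥] x, ⌊y⌋₊ = ⌊x⌋₊ := by
    have hlt : x < ⌊x⌋₊ + 1 := Nat.lt_floor_add_one x
    filter_upwards [self_mem_nhdsWithin, nhdsWithin_le_nhds (eventually_lt_nhds hlt)]
      with y hxy hy
    exact (Nat.floor_eq_iff (hx.trans hxy)).2 ⟨(Nat.floor_le hx).trans hxy, hy⟩
  have hcont : ContinuousWithinAt (fun y => min y 1 + (k ⌊x⌋₊ : ℝ)) (Ici x) x :=
    ((continuous_id.min continuous_const).add continuous_const).continuousWithinAt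
  refine hcont.congr_of_eventuallyEq ?_ rfl
  filter_upwards [hfloor] with y hy
  simp only [stepDensity, hy]

lemma isNDensity_stepDensity (h0 : k 0 = 0) (hk : Monotone k)
    (htop : Tendsto k atTop atTop) : IsNDensity (stepDensity k) := by
  refine ⟨by simp [stepDensity, h0], fun x hx => ?_, (stepDensity_monotone hk).monotoneOn _,
    fun _ => continuousWithinAt_stepDensity, ?_⟩
  · exact add_pos_of_pos_of_nonneg (lt_min hx one_pos) (Nat.cast_nonneg _)
  · have hfloor : Tendsto (fun x : ℝ => (k ⌊x⌋₊ : ℝ)) atTop atTop :=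
      tendsto_natCast_atTop_atTop.comp (htop.comp tendsto_nat_floor_atTop)
    refine tendsto_atTop_mono' atTop ?_ hfloor
    filter_upwards [eventually_ge_atTop 0] with x hx
    exact le_add_of_nonneg_left (le_min hx zero_le_one)

end stepDensity

lemma NFun_le_mul_self {g : ℝ → ℝ} (hg : MonotoneOn g (Ici 0)) {s : ℝ} (hs : 0 ≤ s) :
    NFun g s ≤ s * g s := by
  have hint : IntervalIntegrable g volume 0 s :=
    (hg.mono (by simp [uIcc_of_le hs, Icc_subset_Ici_self])).intervalIntegrable
  calc NFun g s ≤ ∫ _ in (0)..s, g s :=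
        intervalIntegral.integral_mono_on hs hint intervalIntegrable_const
          fun x hx => hg hx.1 (hs : s ∈ Ici 0) hx.2
    _ = s * g s := by simp

lemma ofReal_NFun_stepDensity_le (T : ℕ → ℝ) {s : ℝ} (hs : 0 ≤ s) :
    ENNReal.ofReal (NFun (stepDensity (countBelow T)) s) ≤
      ENNReal.ofReal s + ∑' n, (Ici (T n)).indicator ENNReal.ofReal s := by
  set F := (Finset.range ⌊s⌋₊).filter (T · ≤ ⌊s⌋₊)
  have hG : NFun (stepDensity (countBelow T)) s ≤ s + F.card * s :=
    calc NFun (stepDensity (countBelow T)) s ≤ s * stepDensity (countBelow T) s :=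
          NFun_le_mul_self ((stepDensity_monotone (countBelow_mono T)).monotoneOn _) hs
      _ ≤ s * (1 + F.card) := mul_le_mul_of_nonneg_left (stepDensity_le_one_add s) hs
      _ = s + F.card * s := by ring
  have hF : ∀ n ∈ F, ENNReal.ofReal s = (Ici (T n)).indicator ENNReal.ofReal s := fun n hn =>
    (indicator_of_mem ((Finset.mem_filter.1 hn).2.trans (Nat.floor_le hs)) _).symm
  calc ENNReal.ofReal (NFun (stepDensity (countBelow T)) s)
      ≤ ENNReal.ofReal (s + F.card * s) := ENNReal.ofReal_le_ofReal hG
    _ = ENNReal.ofReal s + ∑ n ∈ F, ENNReal.ofReal s := by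
      rw [ENNReal.ofReal_add hs (by positivity), ENNReal.ofReal_mul (by positivity),
        Finset.sum_const, nsmul_eq_mul, ENNReal.ofReal_natCast]
    _ ≤ ENNReal.ofReal s + ∑' n, (Ici (T n)).indicator ENNReal.ofReal s := by
      rw [Finset.sum_congr rfl hF]
      exact add_le_add le_rfl (ENNReal.sum_le_tsum F)

namespace MeasureTheory.Integrable

variable {α E : Type*} [MeasurableSpace α] {μ : Measure α} [NormedAddCommGroup E] {f : α → E}

lemma exists_lintegral_indicator_Ici_le (hf : Integrable f μ) {ε : ℝ} (hε : 0 < ε) :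
    ∃ T : ℝ, ∫⁻ x, (Ici T).indicator ENNReal.ofReal ‖f x‖ ∂μ ≤ ENNReal.ofReal ε := by
  obtain ⟨T, -, hT⟩ := (memLp_one_iff_integrable.2 hf).integral_indicator_norm_ge_nonneg_le hε
  refine ⟨T, le_of_eq_of_le (lintegral_congr fun x => ?_) hT⟩
  by_cases hx : T ≤ ‖f x‖ <;> simp [hx]

theorem exists_isNDensity_lintegral_NFun_lt_top (hf : Integrable f μ) :
    ∃ g : ℝ → ℝ, IsNDensity g ∧ ∫⁻ x, ENNReal.ofReal (NFun g ‖f x‖) ∂μ < ⊤ := by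
  choose T hT using fun n : ℕ =>
    hf.exists_lintegral_indicator_Ici_le (ε := 2⁻¹ ^ n) (by positivity)
  refine ⟨stepDensity (countBelow T),
    isNDensity_stepDensity (countBelow_zero T) (countBelow_mono T) (tendsto_countBelow_atTop T),
    ?_⟩
  have htail_meas (n : ℕ) : AEMeasurable (fun x => (Ici (T n)).indicator ENNReal.ofReal ‖f x‖) μ :=
    (ENNReal.measurable_ofReal.indicator measurableSet_Ici).comp_aemeasurable hf.1.norm.aemeasurable
  calc ∫⁻ x, ENNReal.ofReal (NFun (stepDensity (countBelow T)) ‖f x‖) ∂μ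
      ≤ ∫⁻ x, ENNReal.ofReal ‖f x‖ + ∑' n, (Ici (T n)).indicator ENNReal.ofReal ‖f x‖ ∂μ :=
        lintegral_mono fun x => ofReal_NFun_stepDensity_le T (norm_nonneg _)
    _ = ∫⁻ x, ENNReal.ofReal ‖f x‖ ∂μ +
          ∑' n, ∫⁻ x, (Ici (T n)).indicator ENNReal.ofReal ‖f x‖ ∂μ := by
        rw [lintegral_add_right' _ (AEMeasurable.tsum htail_meas), lintegral_tsum htail_meas]
    _ ≤ ∫⁻ x, ENNReal.ofReal ‖f x‖ ∂μ + ∑' n : ℕ, ENNReal.ofReal (2⁻¹ ^ n) :=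
        add_le_add le_rfl (ENNReal.tsum_le_tsum hT)
    _ < ⊤ := by
        rw [← ENNReal.ofReal_tsum_of_nonneg (fun n => by positivity)
          (summable_geometric_of_lt_one (by norm_num) (by norm_num))]
        exact ENNReal.add_lt_top.2 ⟨(hasFiniteIntegral_iff_norm f).1 hf.2, ENNReal.ofReal_lt_top⟩

end MeasureTheory.Integrable

theorem stmt6_general {N : ℕ} (Ω : Set (Fin N → ℝ))
    (u : (Fin N → ℝ) → ℝ) (hu : IntegrableOn u Ω) :
    ∃ g : ℝ → ℝ, IsNDensity g ∧ modular Ω (NFun g) u < ⊤ := by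
  simpa only [modular, Real.norm_eq_abs] using hu.exists_isNDensity_lintegral_NFun_lt_top

theorem stmt6 {N : ℕ} (Ω : Set (Fin N → ℝ)) (hΩ : IsOpen Ω)
    (hfin : volume Ω < ⊤)
    (u : (Fin N → ℝ) → ℝ) (hu : IntegrableOn u Ω) :
    ∃ g : ℝ → ℝ, IsNDensity g ∧ modular Ω (NFun g) u < ⊤ :=
  stmt6_general Ω u hu
end

section
/- Let a : (0,∞) → ℝ be such that the map φ : ℝ → ℝ defined by φ(t) = a(|t|)·t for t ≠ 0 and φ(0) = 0 is an odd, increasing homeomorphism of ℝ onto ℝ (in particular a(t) > 0 for all t > 0). Define A : ℝ^N → ℝ^N by A(ξ) = a(|ξ|)·ξ for ξ ≠ 0 and A(0) = 0, where |·| is the Euclidean norm and · the Euclidean inner product. Then for all ξ, ψ ∈ ℝ^N: (A(ξ) − A(ψ)) · (ξ − ψ) ≥ (a(|ξ|)|ξ| − a(|ψ|)|ψ|)·(|ξ| − |ψ|) ≥ 0, and (A(ξ) − A(ψ)) · (ξ − ψ) = 0 if and only if ξ = ψ. -/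
/-!
`A ξ = a ‖ξ‖ • ξ` and `φ t = a |t| * t` hold at `0` too. Expanding
`⟪A ξ - A ψ, ξ - ψ⟫` and bounding the two cross terms by Cauchy–Schwarz gives the lower bound
`(φ ‖ξ‖ - φ ‖ψ‖) (‖ξ‖ - ‖ψ‖)`, which is nonnegative since `φ` is monotone. If the inner product
vanishes, this lower bound vanishes as well, so `‖ξ‖ = ‖ψ‖ = r` by strict monotonicity; then
`A ξ - A ψ = a r • (ξ - ψ)` and `a r > 0` force `ξ = ψ`.
-/

section InnerProductSpace

variable {E : Type*} [NormedAddCommGroup E] [InnerProductSpace ℝ E] {a : ℝ → ℝ}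

theorem real_inner_smul_norm_le (ha : ∀ t, 0 < t → 0 ≤ a t) (ξ ψ : E) :
    inner ℝ (a ‖ξ‖ • ξ) ψ ≤ a ‖ξ‖ * ‖ξ‖ * ‖ψ‖ := by
  rcases eq_or_ne ξ 0 with rfl | hξ
  · simp
  rw [real_inner_smul_left, mul_assoc]
  exact mul_le_mul_of_nonneg_left (real_inner_le_norm ξ ψ) (ha _ (norm_pos_iff.2 hξ))

theorem mul_sub_norm_le_inner_smul_norm_sub (ha : ∀ t, 0 < t → 0 ≤ a t) (ξ ψ : E) :
    (a ‖ξ‖ * ‖ξ‖ - a ‖ψ‖ * ‖ψ‖) * (‖ξ‖ - ‖ψ‖) ≤ inner ℝ (a ‖ξ‖ • ξ - a ‖ψ‖ • ψ) (ξ - ψ) := by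
  have hξψ := real_inner_smul_norm_le ha ξ ψ
  have hψξ := real_inner_smul_norm_le ha ψ ξ
  simp only [inner_sub_left, inner_sub_right, real_inner_smul_left ξ ξ,
    real_inner_smul_left ψ ψ, real_inner_self_eq_norm_sq] at hξψ hψξ ⊢
  nlinarith

theorem inner_smul_norm_sub_of_norm_eq {ξ ψ : E} (h : ‖ξ‖ = ‖ψ‖) :
    inner ℝ (a ‖ξ‖ • ξ - a ‖ψ‖ • ψ) (ξ - ψ) = a ‖ξ‖ * ‖ξ - ψ‖ ^ 2 := by
  rw [← h, ← smul_sub, real_inner_smul_left, real_inner_self_eq_norm_sq]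

theorem eq_of_inner_smul_norm_sub_eq_zero (ha : ∀ t, 0 < t → 0 < a t) {ξ ψ : E}
    (hnorm : ‖ξ‖ = ‖ψ‖) (h : inner ℝ (a ‖ξ‖ • ξ - a ‖ψ‖ • ψ) (ξ - ψ) = 0) : ξ = ψ := by
  rcases eq_or_ne ξ 0 with rfl | hξ
  · exact (norm_eq_zero.1 (hnorm.symm.trans norm_zero)).symm
  rw [inner_smul_norm_sub_of_norm_eq hnorm, mul_eq_zero] at h
  rcases h with ha0 | hsq
  · exact absurd ha0 (ha _ (norm_pos_iff.2 hξ)).ne'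
  · exact sub_eq_zero.1 (norm_eq_zero.1 (pow_eq_zero_iff two_ne_zero |>.1 hsq))

end InnerProductSpace

theorem pos_of_strictMono_of_eq_mul {a φ : ℝ → ℝ} (hmono : StrictMono φ) (hφ0 : φ 0 = 0)
    {t : ℝ} (ht : 0 < t) (hφt : φ t = a t * t) : 0 < a t :=
  pos_of_mul_pos_left (hφt ▸ hφ0 ▸ hmono ht) ht.le

theorem stmt19_general {N : ℕ}
    (a : ℝ → ℝ) (φ : ℝ → ℝ)
    (hφ0 : φ 0 = 0) (hφ : ∀ t : ℝ, t ≠ 0 → φ t = a |t| * t)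
    (hmono : StrictMono φ)
    (A : EuclideanSpace ℝ (Fin N) → EuclideanSpace ℝ (Fin N))
    (hA0 : A 0 = 0) (hA : ∀ ξ : EuclideanSpace ℝ (Fin N), ξ ≠ 0 → A ξ = a ‖ξ‖ • ξ) :
    ∀ ξ ψ : EuclideanSpace ℝ (Fin N),
      (φ ‖ξ‖ - φ ‖ψ‖) * (‖ξ‖ - ‖ψ‖) ≤ (inner ℝ (A ξ - A ψ) (ξ - ψ) : ℝ) ∧
      0 ≤ (φ ‖ξ‖ - φ ‖ψ‖) * (‖ξ‖ - ‖ψ‖) ∧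
      ((inner ℝ (A ξ - A ψ) (ξ - ψ) : ℝ) = 0 ↔ ξ = ψ) := by
  have hφ' (t : ℝ) (ht : 0 ≤ t) : φ t = a t * t := by
    rcases ht.eq_or_lt with rfl | ht
    · simp [hφ0]
    · rw [hφ t ht.ne', abs_of_pos ht]
  have hA' (ξ : EuclideanSpace ℝ (Fin N)) : A ξ = a ‖ξ‖ • ξ := by
    rcases eq_or_ne ξ 0 with rfl | hξ
    · simp [hA0]
    · exact hA ξ hξ
  have ha (t : ℝ) (ht : 0 < t) : 0 < a t := pos_of_strictMono_of_eq_mul hmono hφ0 ht (hφ' t ht.le)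
  intro ξ ψ
  have hlower : (φ ‖ξ‖ - φ ‖ψ‖) * (‖ξ‖ - ‖ψ‖) ≤ inner ℝ (A ξ - A ψ) (ξ - ψ) := by
    rw [hφ' _ (norm_nonneg ξ), hφ' _ (norm_nonneg ψ), hA', hA']
    exact mul_sub_norm_le_inner_smul_norm_sub (fun t ht => (ha t ht).le) ξ ψ
  have hnonneg : 0 ≤ (φ ‖ξ‖ - φ ‖ψ‖) * (‖ξ‖ - ‖ψ‖) :=
    (monovary_id_iff.2 hmono.monotone).sub_mul_sub_nonneg ‖ψ‖ ‖ξ‖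
  refine ⟨hlower, hnonneg, fun h0 => ?_, by rintro rfl; simp⟩
  have hnorm : ‖ξ‖ = ‖ψ‖ := by
    rcases mul_eq_zero.1 (le_antisymm (h0 ▸ hlower) hnonneg) with hφeq | hsub
    · exact hmono.injective (sub_eq_zero.1 hφeq)
    · exact sub_eq_zero.1 hsub
  rw [hA', hA'] at h0
  exact eq_of_inner_smul_norm_sub_eq_zero ha hnorm h0

theorem stmt19 {N : ℕ}
    (a : ℝ → ℝ) (φ : ℝ → ℝ)
    (hφ0 : φ 0 = 0) (hφ : ∀ t : ℝ, t ≠ 0 → φ t = a |t| * t)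
    (hodd : ∀ t : ℝ, φ (-t) = -φ t)
    (hmono : StrictMono φ) (hcont : Continuous φ)
    (hsurj : Function.Surjective φ)
    (A : EuclideanSpace ℝ (Fin N) → EuclideanSpace ℝ (Fin N))
    (hA0 : A 0 = 0) (hA : ∀ ξ : EuclideanSpace ℝ (Fin N), ξ ≠ 0 → A ξ = a ‖ξ‖ • ξ) :
    ∀ ξ ψ : EuclideanSpace ℝ (Fin N),
      (φ ‖ξ‖ - φ ‖ψ‖) * (‖ξ‖ - ‖ψ‖) ≤ (inner ℝ (A ξ - A ψ) (ξ - ψ) : ℝ) ∧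
      0 ≤ (φ ‖ξ‖ - φ ‖ψ‖) * (‖ξ‖ - ‖ψ‖) ∧
      ((inner ℝ (A ξ - A ψ) (ξ - ψ) : ℝ) = 0 ↔ ξ = ψ) :=
  stmt19_general a φ hφ0 hφ hmono A hA0 hA
end
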